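/- arXiv:math/0212264 — 6 statements merged into one kernel-verified Lean document; each statement's English description precedes it below -/
import Mathlib

section
/- Let 𝒜 be a unital C*-algebra (over ℂ) and let A, B ∈ 𝒜 be self-adjoint elements satisfying A²B + BA² = 2ABA. Then AB = BA. (This is the claim that at the parameter value λ = 1 the Bratteli–Elliott–Evans–Kishimoto relation A²B + BA² = 2λABA + 4(1−λ²)B forces commutativity, so the algebra corresponds to the classical 2-sphere.) -/
/-!
Write `D = ⁅A, B⁆`. The relation says exactly that `A` commutes with `D`; then `⁅·, B⁆`
differentiates the powers of every multiple `X` of `A`, which gives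
`⁅exp X, B⁆ = ⁅X, B⁆ * exp X`. For `X = t • I • A` the element `exp X` is unitary, so
conjugating `B` by it yields `‖B + t • I • D‖ = ‖B‖` for every real `t`. A bounded line has
zero direction, hence `D = 0`.
-/

open scoped Nat

theorem commute_lie_of_sq_mul_add_mul_sq {R : Type*} [Ring R] {A B : R}
    (h : A ^ 2 * B + B * A ^ 2 = 2 * (A * B * A)) : Commute A ⁅A, B⁆ := by
  rw [commute_iff_eq, ← sub_eq_zero]
  calc A * ⁅A, B⁆ - ⁅A, B⁆ * A = A ^ 2 * B + B * A ^ 2 - 2 * (A * B * A) := by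
        simp only [Ring.lie_def]; noncomm_ring
    _ = 0 := sub_eq_zero.mpr h

theorem Commute.lie_pow_succ_left {R : Type*} [Ring R] {X B : R} (h : Commute X ⁅X, B⁆)
    (n : ℕ) : ⁅X ^ (n + 1), B⁆ = (n + 1) • (⁅X, B⁆ * X ^ n) := by
  induction n with
  | zero => simp
  | succ n ih =>
    have hstep : ⁅X ^ (n + 2), B⁆ = X * ⁅X ^ (n + 1), B⁆ + ⁅X, B⁆ * X ^ (n + 1) := by
      simp only [Ring.lie_def, pow_succ' X (n + 1)]
      noncomm_ring
    rw [hstep, ih, mul_smul_comm, ← mul_assoc, h.eq, mul_assoc, ← pow_succ']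
    exact (succ_nsmul _ _).symm

theorem Commute.lie_exp_left {𝔸 : Type*} [NormedRing 𝔸] [NormedAlgebra ℚ 𝔸] [CompleteSpace 𝔸]
    {X B : 𝔸} (h : Commute X ⁅X, B⁆) :
    ⁅NormedSpace.exp X, B⁆ = ⁅X, B⁆ * NormedSpace.exp X := by
  have hexp := NormedSpace.exp_series_hasSum_exp' (𝕂 := ℚ) X
  have hlhs : HasSum (fun n ↦ (n ! : ℚ)⁻¹ • ⁅X ^ n, B⁆) ⁅NormedSpace.exp X, B⁆ := by
    simpa only [Ring.lie_def, smul_sub, smul_mul_assoc, mul_smul_comm] using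
      (hexp.mul_right B).sub (hexp.mul_left B)
  have hshift : (fun n ↦ ((n + 1)! : ℚ)⁻¹ • ⁅X ^ (n + 1), B⁆)
      = fun n ↦ ⁅X, B⁆ * ((n ! : ℚ)⁻¹ • X ^ n) := by
    ext n
    rw [h.lie_pow_succ_left, ← Nat.cast_smul_eq_nsmul ℚ, smul_smul, mul_smul_comm]
    congr 1
    push_cast [Nat.factorial_succ]
    field_simp
  have hsucc : HasSum (fun n ↦ ((n + 1)! : ℚ)⁻¹ • ⁅X ^ (n + 1), B⁆)
      (⁅X, B⁆ * NormedSpace.exp X) := by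
    rw [hshift]
    exact hexp.mul_left _
  have hrhs : HasSum (fun n ↦ (n ! : ℚ)⁻¹ • ⁅X ^ n, B⁆) (⁅X, B⁆ * NormedSpace.exp X) := by
    simpa [Ring.lie_def] using
      (hasSum_nat_add_iff (f := fun n ↦ (n ! : ℚ)⁻¹ • ⁅X ^ n, B⁆) 1).mp hsucc
  exact hlhs.unique hrhs

theorem Commute.norm_add_lie_of_mem_skewAdjoint {𝔸 : Type*} [NormedRing 𝔸] [StarRing 𝔸]
    [CStarRing 𝔸] [NormedAlgebra ℚ 𝔸] [CompleteSpace 𝔸] {X B : 𝔸} (h : Commute X ⁅X, B⁆)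
    (hX : X ∈ skewAdjoint 𝔸) : ‖B + ⁅X, B⁆‖ = ‖B‖ := by
  have hU : NormedSpace.exp X ∈ unitary 𝔸 := NormedSpace.exp_mem_unitary_of_mem_skewAdjoint hX
  have hconj : NormedSpace.exp X * B = (B + ⁅X, B⁆) * NormedSpace.exp X := by
    rw [add_mul, ← h.lie_exp_left, Ring.lie_def]
    abel
  rw [← CStarRing.norm_mul_mem_unitary _ hU, ← hconj, CStarRing.norm_mem_unitary_mul B hU]

theorem eq_zero_of_forall_norm_add_smul_le {E : Type*} [NormedAddCommGroup E] [NormedSpace ℝ E]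
    {x y : E} {C : ℝ} (h : ∀ t : ℝ, ‖x + t • y‖ ≤ C) : y = 0 := by
  by_contra hy
  have hC : 0 ≤ C := (norm_nonneg _).trans (h 0)
  have hy' : 0 < ‖y‖ := norm_pos_iff.mpr hy
  set t := (C + ‖x‖ + 1) / ‖y‖
  have ht : ‖t • y‖ = C + ‖x‖ + 1 := by
    rw [norm_smul, Real.norm_of_nonneg (by positivity), div_mul_cancel₀ _ hy'.ne']
  have hle : ‖t • y‖ ≤ ‖x + t • y‖ + ‖x‖ := by
    simpa only [add_sub_cancel_left] using norm_sub_le (x + t • y) x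
  linarith [h t]

theorem beek_lambda_one_commutes_general
    {𝒜 : Type*} [NormedRing 𝒜] [StarRing 𝒜] [CStarRing 𝒜]
    [CompleteSpace 𝒜] [NormedAlgebra ℂ 𝒜] [StarModule ℂ 𝒜]
    (A B : 𝒜) (hA : IsSelfAdjoint A)
    (h : A ^ 2 * B + B * A ^ 2 = 2 * (A * B * A)) :
    A * B = B * A := by
  let +nondep : NormedAlgebra ℚ 𝒜 := .restrictScalars ℚ ℂ 𝒜
  have hcomm := commute_lie_of_sq_mul_add_mul_sq h
  have hskew : Complex.I • A ∈ skewAdjoint 𝒜 := hA.smul_mem_skewAdjoint Complex.conj_I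
  have hnorm (t : ℝ) : ‖B + t • Complex.I • ⁅A, B⁆‖ ≤ ‖B‖ := by
    have hlie : ⁅t • Complex.I • A, B⁆ = t • Complex.I • ⁅A, B⁆ := by
      simp only [Ring.lie_def, smul_mul_assoc, mul_smul_comm, smul_sub]
    have hcomm_t : Commute (t • Complex.I • A) ⁅t • Complex.I • A, B⁆ := by
      rw [hlie]
      exact (((hcomm.smul_left _).smul_right _).smul_left _).smul_right _
    rw [← hlie, hcomm_t.norm_add_lie_of_mem_skewAdjoint (skewAdjoint.smul_mem t hskew)]
  have hD : Complex.I • ⁅A, B⁆ = 0 := eq_zero_of_forall_norm_add_smul_le hnorm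
  rwa [smul_eq_zero_iff_right Complex.I_ne_zero, Ring.lie_def, sub_eq_zero] at hD

/-- In a unital C*-algebra, self-adjoint elements `A`, `B` with
`A²B + BA² = 2ABA` (the λ = 1 Bratteli–Elliott–Evans–Kishimoto relation)
commute: `AB = BA`. -/
theorem beek_lambda_one_commutes
    {𝒜 : Type*} [NormedRing 𝒜] [StarRing 𝒜] [CStarRing 𝒜]
    [CompleteSpace 𝒜] [NormedAlgebra ℂ 𝒜] [StarModule ℂ 𝒜]
    (A B : 𝒜) (hA : IsSelfAdjoint A) (hB : IsSelfAdjoint B)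
    (h : A ^ 2 * B + B * A ^ 2 = 2 * (A * B * A)) :
    A * B = B * A :=
  beek_lambda_one_commutes_general A B hA h
end

section
/- Let 𝒜 be a unital complex star algebra, let q be a real number with q > 0, and let A, B ∈ 𝒜 satisfy the Gurevich–Leclercq–Saponov sphere relations with h = 0: A = A*, q·B*B + q⁻¹·BB* + q²(q + q⁻¹)·A² = (q + q⁻¹)·1, q²·AB = BA, and BB* − B*B = (1 − q⁴)·A². Then B*B = 1 − A² and BB* = 1 − q⁴·A²; that is, A and B satisfy the equatorial Podleś sphere relations with parameter q: A = A*, BA = q²AB, BB* = 1 − q⁴A², B*B = 1 − A². -/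
/-- The Gurevich–Leclercq–Saponov sphere relations with `h = 0` imply the
equatorial Podleś sphere relations with parameter `q`. -/
theorem gls_h_zero_is_equatorial_podles
    {𝒜 : Type*} [Ring 𝒜] [Algebra ℂ 𝒜] [StarRing 𝒜] [StarModule ℂ 𝒜]
    (q : ℝ) (hq : 0 < q) (A B : 𝒜)
    (hA : star A = A)
    (h1 : (q : ℂ) • (star B * B) + ((q⁻¹ : ℝ) : ℂ) • (B * star B)
        + ((q ^ 2 * (q + q⁻¹) : ℝ) : ℂ) • (A ^ 2) = ((q + q⁻¹ : ℝ) : ℂ) • (1 : 𝒜))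
    (h2 : ((q ^ 2 : ℝ) : ℂ) • (A * B) = B * A)
    (h3 : B * star B - star B * B = ((1 - q ^ 4 : ℝ) : ℂ) • (A ^ 2)) :
    star A = A ∧
    B * A = ((q ^ 2 : ℝ) : ℂ) • (A * B) ∧
    B * star B = 1 - ((q ^ 4 : ℝ) : ℂ) • (A ^ 2) ∧
    star B * B = 1 - A ^ 2 := by
  have hq' : q ≠ 0 := ne_of_gt hq
  have hc : ((q + q⁻¹ : ℝ) : ℂ) ≠ 0 := by
    have : (0 : ℝ) < q + q⁻¹ := by positivity
    exact_mod_cast ne_of_gt this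
  have hqc : (q : ℂ) ≠ 0 := by exact_mod_cast hq'
  have key : ((q + q⁻¹ : ℝ) : ℂ) • (star B * B)
      = ((q + q⁻¹ : ℝ) : ℂ) • ((1 : 𝒜) - A ^ 2) := by
    linear_combination (norm := match_scalars <;> (push_cast; field_simp; try ring)) h1 - (((q⁻¹ : ℝ) : ℂ)) • h3
  have hX : star B * B = 1 - A ^ 2 := smul_right_injective 𝒜 hc key
  have hY : B * star B = 1 - ((q ^ 4 : ℝ) : ℂ) • (A ^ 2) := by
    linear_combination (norm := match_scalars <;> (push_cast; try ring)) h3 + hX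
  exact ⟨hA, h2.symm, hY, hX⟩
end

section
/- Let p, q be real numbers with 0 < p < 1 and 0 < q < 1. The set of pairs (A, B) ∈ ℝ × ℂ satisfying the Calow–Matthes 2-sphere relations interpreted in ℂ (with * the complex conjugation), namely |B|² − q|B|² = (p − q)A + 1 − p, AB − pBA = (1 − p)B, and (1 − A)(|B|² − A) = 0, is exactly { (1, B) : B ∈ ℂ, |B| = 1 }. In particular, the classical subset of the Calow–Matthes quantum 2-sphere is a circle. -/
/-!
The commutation relation `AB − pBA = (1 − p)B` reads `(1 − p)(A − 1)B = 0` in `ℂ`, so `A = 1` or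
`B = 0`. With `r = |B|²`, the two remaining relations become real equations in `A` and `r`:
`B = 0` forces `A ∈ {0, 1}` by the third one, and `A = 0` contradicts the first; once `A = 1`, the
first one is `(1 − q) r = 1 − q`, i.e. `|B| = 1`.
-/

namespace CalowMatthes

theorem commutation_iff {p : ℝ} (hp : p ≠ 1) (A : ℝ) (B : ℂ) :
    (A : ℂ) * B - (p : ℂ) * (B * (A : ℂ)) = ((1 - p : ℝ) : ℂ) * B ↔ A = 1 ∨ B = 0 := by
  have hp' : 1 - p ≠ 0 := sub_ne_zero.2 hp.symm
  rw [← sub_eq_zero,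
    show (A : ℂ) * B - p * (B * A) - ((1 - p : ℝ) : ℂ) * B = (((1 - p) * (A - 1) : ℝ) : ℂ) * B by
      push_cast; ring]
  simp only [mul_eq_zero, Complex.ofReal_eq_zero, hp', false_or, sub_eq_zero]

theorem normSq_relations_iff {p q : ℝ} (hp : p ≠ 1) (hq : q ≠ 1) (A r : ℝ) :
    (r - q * r = (p - q) * A + 1 - p ∧ (A = 1 ∨ r = 0) ∧ (1 - A) * (r - A) = 0) ↔
      A = 1 ∧ r = 1 := by
  constructor
  · rintro ⟨h1, hA | hr, h3⟩
    · subst hA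
      have hq' : 1 - q ≠ 0 := sub_ne_zero.2 hq.symm
      refine ⟨rfl, ?_⟩
      have : (1 - q) * (r - 1) = 0 := by linarith
      simpa [hq', sub_eq_zero] using this
    · subst hr
      rcases mul_eq_zero.1 h3 with hA | hA
      · obtain rfl : A = 1 := by linarith
        exact absurd (by linarith) hq
      · obtain rfl : A = 0 := by linarith
        exact absurd (by linarith) hp
  · rintro ⟨rfl, rfl⟩
    exact ⟨by ring, Or.inl rfl, by ring⟩

end CalowMatthes

open CalowMatthes in
theorem calow_matthes_2sphere_classical_points_general (p q : ℝ)
    (hp1 : p < 1) (hq1 : q < 1) :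
    {x : ℝ × ℂ |
        (‖x.2‖) ^ 2 - q * (‖x.2‖) ^ 2 = (p - q) * x.1 + 1 - p ∧
        (x.1 : ℂ) * x.2 - (p : ℂ) * (x.2 * (x.1 : ℂ)) = ((1 - p : ℝ) : ℂ) * x.2 ∧
        (1 - x.1) * ((‖x.2‖) ^ 2 - x.1) = 0} =
    {x : ℝ × ℂ | x.1 = 1 ∧ ‖x.2‖ = 1} := by
  ext ⟨A, B⟩
  have hB0 : B = 0 ↔ ‖B‖ ^ 2 = 0 := by simp
  have hB1 : ‖B‖ = 1 ↔ ‖B‖ ^ 2 = 1 := (pow_eq_one_iff_of_nonneg (norm_nonneg B) two_ne_zero).symm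
  simp only [Set.mem_ofPred_eq, commutation_iff hp1.ne, hB0, hB1]
  exact normSq_relations_iff hp1.ne hq1.ne A _

/-- The classical subset of the Calow–Matthes quantum 2-sphere is the circle
`{(1, B) : |B| = 1}`. -/
theorem calow_matthes_2sphere_classical_points (p q : ℝ)
    (hp0 : 0 < p) (hp1 : p < 1) (hq0 : 0 < q) (hq1 : q < 1) :
    {x : ℝ × ℂ |
        (‖x.2‖) ^ 2 - q * (‖x.2‖) ^ 2 = (p - q) * x.1 + 1 - p ∧
        (x.1 : ℂ) * x.2 - (p : ℂ) * (x.2 * (x.1 : ℂ)) = ((1 - p : ℝ) : ℂ) * x.2 ∧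
        (1 - x.1) * ((‖x.2‖) ^ 2 - x.1) = 0} =
    {x : ℝ × ℂ | x.1 = 1 ∧ ‖x.2‖ = 1} :=
  calow_matthes_2sphere_classical_points_general p q hp1 hq1
end

section
/- Let t be a real number with 0 < t < 1/2, and define f : ℝ → ℝ by f(x) = tx² + x − t, which restricts to a homeomorphism of the open interval (−1, 1). Then this restriction is topologically conjugate to the translation by 1 on ℝ: there exists a homeomorphism h from ℝ onto (−1, 1) such that f(h(x)) = h(x − 1) for all x ∈ ℝ. -/
/-!
On `(−1, 1)` the map `f` is an increasing bijection with `f x < x`, since `f x - x = t (x² - 1)`.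
For an order automorphism moving every point the same way, each orbit is unbounded in both
directions: the infimum of an orbit bounded below would be a fixed point. Transported to `ℝ`, the
orbit of `0` therefore cuts the line into the fundamental domains `[ψⁿ 0, ψⁿ⁺¹ 0)` of `ψ = f⁻¹`;
mapping `[0, 1)` linearly onto the first one and extending equivariantly, `x ↦ ψ^⌊x⌋ (fract x · ψ 0)`,
gives the conjugacy with the translation.
-/

open Set

namespace OrderIso

section Orbits

variable {α : Type*}

theorem strictMono_zpow_apply [Preorder α] (ψ : α ≃o α) {p : α} (hp : p < ψ p) :
    StrictMono fun n : ℤ => (ψ ^ n) p :=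
  strictMono_int_of_lt_succ fun n => by
    simpa only [zpow_add_one, RelIso.mul_apply] using (ψ ^ n).strictMono hp

theorem exists_pow_apply_lt [ConditionallyCompleteLinearOrder α] (φ : α ≃o α)
    (hφ : ∀ x, φ x < x) (p y : α) : ∃ n : ℕ, (φ ^ n) p < y := by
  by_contra! h
  have hbdd : BddBelow (range fun n : ℕ => (φ ^ n) p) := ⟨y, by rintro _ ⟨n, rfl⟩; exact h n⟩
  set L := ⨅ n : ℕ, (φ ^ n) p
  have hL : φ.symm L ≤ L := le_ciInf fun n => by
    rw [symm_apply_le, ← RelIso.mul_apply, ← pow_succ']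
    exact ciInf_le hbdd (n + 1)
  exact (hφ (φ.symm L)).not_ge (by rwa [apply_symm_apply])

theorem exists_mem_Ico_zpow_apply [ConditionallyCompleteLinearOrder α] (ψ : α ≃o α)
    (hψ : ∀ x, x < ψ x) (p y : α) : ∃ n : ℤ, y ∈ Ico ((ψ ^ n) p) ((ψ ^ (n + 1)) p) := by
  have hψ' : ∀ x, ψ⁻¹ x < x := fun x => by simpa using hψ (ψ⁻¹ x)
  obtain ⟨m, hm⟩ := (ψ⁻¹).exists_pow_apply_lt hψ' p y
  obtain ⟨k, hk⟩ := (ψ⁻¹).exists_pow_apply_lt hψ' y p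
  have hmono := ψ.strictMono_zpow_apply (hψ p)
  have hyk : y < (ψ ^ (k : ℤ)) p := by
    rw [inv_pow] at hk
    simpa using (ψ ^ k).symm_apply_lt.mp hk
  obtain ⟨n, hn, hmax⟩ := Int.exists_greatest_of_bdd (P := fun n : ℤ => (ψ ^ n) p ≤ y)
    ⟨k, fun n hn => (hmono.lt_iff_lt.mp (hn.trans_lt hyk)).le⟩
    ⟨-m, by simpa [zpow_neg] using hm.le⟩
  exact ⟨n, hn, not_le.mp fun h => by simpa using hmax (n + 1) h⟩

end Orbits

section Translation

variable (ψ : ℝ ≃o ℝ)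

noncomputable def extendFundamentalDomain (x : ℝ) : ℝ :=
  (ψ ^ ⌊x⌋) (Int.fract x * ψ 0)

theorem extendFundamentalDomain_intCast_add (n : ℤ) {s : ℝ} (hs : s ∈ Ico 0 1) :
    ψ.extendFundamentalDomain (n + s) = (ψ ^ n) (s * ψ 0) := by
  rw [extendFundamentalDomain, Int.floor_intCast_add, Int.fract_intCast_add,
    Int.floor_eq_zero_iff.mpr hs, add_zero, Int.fract_eq_self.mpr hs]

theorem extendFundamentalDomain_add_one (x : ℝ) :
    ψ.extendFundamentalDomain (x + 1) = ψ (ψ.extendFundamentalDomain x) := by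
  rw [extendFundamentalDomain, extendFundamentalDomain, Int.floor_add_one, Int.fract_add_one,
    add_comm _ 1, zpow_one_add, RelIso.mul_apply]

variable {ψ} (hψ : ∀ x, x < ψ x)
include hψ

theorem strictMono_extendFundamentalDomain : StrictMono ψ.extendFundamentalDomain := by
  have hb : 0 < ψ 0 := hψ 0
  have horbit := ψ.strictMono_zpow_apply hb
  intro x y hxy
  rcases (Int.floor_le_floor hxy.le).eq_or_lt with hfloor | hfloor
  · have hfract : Int.fract x < Int.fract y := by
      rw [Int.fract, Int.fract, hfloor]
      linarith
    rw [extendFundamentalDomain, extendFundamentalDomain, hfloor]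
    exact (ψ ^ ⌊y⌋).strictMono (mul_lt_mul_of_pos_right hfract hb)
  · calc ψ.extendFundamentalDomain x
        < (ψ ^ ⌊x⌋) (1 * ψ 0) :=
          (ψ ^ ⌊x⌋).strictMono (mul_lt_mul_of_pos_right (Int.fract_lt_one x) hb)
      _ = (ψ ^ (⌊x⌋ + 1)) 0 := by rw [one_mul, zpow_add_one, RelIso.mul_apply]
      _ ≤ (ψ ^ ⌊y⌋) 0 := horbit.monotone (Int.add_one_le_iff.mpr hfloor)
      _ ≤ ψ.extendFundamentalDomain y :=
          (ψ ^ ⌊y⌋).monotone (mul_nonneg (Int.fract_nonneg y) hb.le)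

theorem surjective_extendFundamentalDomain : Function.Surjective ψ.extendFundamentalDomain := by
  intro y
  have hb : 0 < ψ 0 := hψ 0
  obtain ⟨n, hn_le, hn_lt⟩ := ψ.exists_mem_Ico_zpow_apply hψ 0 y
  set u := (ψ ^ n).symm y
  have hu : u ∈ Ico 0 (ψ 0) := by
    constructor
    · exact (ψ ^ n).le_symm_apply.mpr hn_le
    · rw [(ψ ^ n).symm_apply_lt, ← RelIso.mul_apply, ← zpow_add_one]
      exact hn_lt
  have hs : u / ψ 0 ∈ Ico 0 1 :=
    ⟨div_nonneg hu.1 hb.le, (div_lt_one hb).mpr hu.2⟩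
  refine ⟨n + u / ψ 0, ?_⟩
  rw [extendFundamentalDomain_intCast_add ψ n hs, div_mul_cancel₀ u hb.ne']
  exact (ψ ^ n).apply_symm_apply y

theorem exists_conj_add_one : ∃ H : ℝ ≃o ℝ, ∀ x, H (x + 1) = ψ (H x) :=
  ⟨StrictMono.orderIsoOfSurjective _ (strictMono_extendFundamentalDomain hψ)
    (surjective_extendFundamentalDomain hψ), ψ.extendFundamentalDomain_add_one⟩

end Translation

theorem exists_conj_add_one_of_orderIso {α : Type*} [Preorder α] (e : ℝ ≃o α) {ψ : α ≃o α}
    (hψ : ∀ x, x < ψ x) : ∃ H : ℝ ≃o α, ∀ x, H (x + 1) = ψ (H x) := by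
  obtain ⟨H, hH⟩ := exists_conj_add_one (ψ := (e.trans ψ).trans e.symm)
    fun x => by simpa using e.lt_symm_apply.mpr (hψ (e x))
  exact ⟨H.trans e, fun x => by simp [hH]⟩

end OrderIso

section IntervalOrderIso

variable {α : Type*} [ConditionallyCompleteLinearOrder α] [TopologicalSpace α] [OrderTopology α]
  [DenselyOrdered α] {f : α → α} {a b : α}

noncomputable def StrictMonoOn.orderIsoIoo (hcont : ContinuousOn f (Icc a b))
    (hmono : StrictMonoOn f (Icc a b)) (ha : f a = a) (hb : f b = b) : Ioo a b ≃o Ioo a b :=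
  StrictMono.orderIsoOfSurjective
    (MapsTo.restrict f _ _ (by simpa only [ha, hb] using hmono.mapsTo_Ioo))
    (fun _ _ hxy => hmono (Ioo_subset_Icc_self (Subtype.prop _))
      (Ioo_subset_Icc_self (Subtype.prop _)) hxy)
    (by
      rintro ⟨y, hy⟩
      have hab : a ≤ b := hy.1.le.trans hy.2.le
      obtain ⟨x, hx, rfl⟩ := intermediate_value_Icc hab hcont
        (by rw [ha, hb]; exact Ioo_subset_Icc_self hy)
      have hxa : x ≠ a := by rintro rfl; exact hy.1.ne ha.symm
      have hxb : x ≠ b := by rintro rfl; exact hy.2.ne hb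
      exact ⟨⟨x, lt_of_le_of_ne hx.1 hxa.symm, lt_of_le_of_ne hx.2 hxb⟩, rfl⟩)

end IntervalOrderIso

section Natsume

def natsumeMap (t x : ℝ) : ℝ := t * x ^ 2 + x - t

variable {t : ℝ}

theorem natsumeMap_neg_one : natsumeMap t (-1) = -1 := by
  unfold natsumeMap; ring

theorem natsumeMap_one : natsumeMap t 1 = 1 := by
  unfold natsumeMap; ring

theorem continuous_natsumeMap : Continuous (natsumeMap t) := by
  unfold natsumeMap; fun_prop

theorem strictMonoOn_natsumeMap (ht0 : 0 ≤ t) (ht1 : t ≤ 1 / 2) :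
    StrictMonoOn (natsumeMap t) (Icc (-1) 1) := by
  intro x hx y hy hxy
  have hfactor : natsumeMap t y - natsumeMap t x = (y - x) * (t * (x + y) + 1) := by
    unfold natsumeMap; ring
  have hslope : 0 < t * (x + y) + 1 := by nlinarith [hx.1, hy.2]
  nlinarith [mul_pos (sub_pos.mpr hxy) hslope]

theorem natsumeMap_lt_self (ht0 : 0 < t) {x : ℝ} (hx : x ∈ Ioo (-1) 1) : natsumeMap t x < x := by
  have hsq : x ^ 2 < 1 := by nlinarith [hx.1, hx.2]
  unfold natsumeMap; nlinarith

end Natsume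

/-- For `0 < t < 1/2`, the homeomorphism `x ↦ tx² + x − t` of `(−1, 1)` is
topologically conjugate to the translation by 1 on `ℝ`: there is a
homeomorphism `h : ℝ ≃ₜ (−1, 1)` with `f(h(x)) = h(x − 1)` for all `x`. -/
theorem natsume_map_conjugate_to_translation (t : ℝ) (ht0 : 0 < t) (ht1 : t < 1 / 2) :
    ∃ h : ℝ ≃ₜ (Set.Ioo (-1 : ℝ) 1),
      ∀ x : ℝ, t * ((h x : ℝ)) ^ 2 + (h x : ℝ) - t = (h (x - 1) : ℝ) := by
  set φ := (strictMonoOn_natsumeMap ht0.le ht1.le).orderIsoIoo continuous_natsumeMap.continuousOn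
    natsumeMap_neg_one natsumeMap_one
  obtain ⟨H, hH⟩ := OrderIso.exists_conj_add_one_of_orderIso (orderIsoIooNegOneOne ℝ)
    (ψ := φ.symm) fun x => φ.lt_symm_apply.mpr (natsumeMap_lt_self ht0 x.prop)
  refine ⟨H.toHomeomorph, fun x => ?_⟩
  have hφ : φ (H x) = H (x - 1) := by simpa using congrArg φ (hH (x - 1))
  exact congrArg Subtype.val hφ
end

section
/- Let 𝒜 be a unital complex star algebra, let θ be a real number with −π < θ < π, and let x⁰, x¹, x², x³ ∈ 𝒜 be self-adjoint elements satisfying the Connes–Dubois-Violette 3-sphere relations at the parameter values φ₁ = φ₂ = −θ/2, φ₃ = 0, namely: cos(θ/2)(x⁰x¹ − x¹x⁰) = −i·sin(θ/2)(x²x³ + x³x²); cos(θ/2)(x⁰x² − x²x⁰) = i·sin(θ/2)(x³x¹ + x¹x³); x⁰x³ = x³x⁰; cos(θ/2)(x²x³ − x³x²) = i·sin(θ/2)(x⁰x¹ + x¹x⁰); cos(θ/2)(x³x¹ − x¹x³) = i·sin(θ/2)(x⁰x² + x²x⁰); x¹x² = x²x¹; and (x⁰)² + (x¹)² + (x²)²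 + (x³)² = 1. Then the elements Z := x⁰ + i·x³ and W := x¹ + i·x² are normal (ZZ* = Z*Z and WW* = W*W), satisfy Z*Z + W*W = 1, and satisfy the exchange relation ZW = e^{iθ}·WZ. (This identifies the one-parameter subfamily φ₁ = φ₂ = −θ/2, φ₃ = 0 of Connes–Dubois-Violette 3-spheres with the Matsumoto/Natsume–Olsen quantum 3-sphere with constant deformation parameter.) -/
/-- The one-parameter subfamily `φ₁ = φ₂ = −θ/2`, `φ₃ = 0` of the
Connes–Dubois-Violette quantum 3-spheres coincides with the
Matsumoto/Natsume–Olsen quantum 3-sphere: `Z := x⁰ + i x³` and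
`W := x¹ + i x²` are normal, satisfy `Z*Z + W*W = 1` and `ZW = e^{iθ} WZ`. -/
theorem cdv_subfamily_is_matsumoto
    {𝒜 : Type*} [Ring 𝒜] [Algebra ℂ 𝒜] [StarRing 𝒜] [StarModule ℂ 𝒜]
    (θ : ℝ) (hθ1 : -Real.pi < θ) (hθ2 : θ < Real.pi)
    (x0 x1 x2 x3 : 𝒜)
    (h0 : star x0 = x0) (h1 : star x1 = x1) (h2 : star x2 = x2) (h3 : star x3 = x3)
    (r1 : ((Real.cos (θ / 2) : ℂ)) • (x0 * x1 - x1 * x0)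
        = (-(Complex.I * (Real.sin (θ / 2) : ℂ))) • (x2 * x3 + x3 * x2))
    (r2 : ((Real.cos (θ / 2) : ℂ)) • (x0 * x2 - x2 * x0)
        = (Complex.I * (Real.sin (θ / 2) : ℂ)) • (x3 * x1 + x1 * x3))
    (r3 : x0 * x3 = x3 * x0)
    (r4 : ((Real.cos (θ / 2) : ℂ)) • (x2 * x3 - x3 * x2)
        = (Complex.I * (Real.sin (θ / 2) : ℂ)) • (x0 * x1 + x1 * x0))
    (r5 : ((Real.cos (θ / 2) : ℂ)) • (x3 * x1 - x1 * x3)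
        = (Complex.I * (Real.sin (θ / 2) : ℂ)) • (x0 * x2 + x2 * x0))
    (r6 : x1 * x2 = x2 * x1)
    (r7 : x0 ^ 2 + x1 ^ 2 + x2 ^ 2 + x3 ^ 2 = 1) :
    (x0 + Complex.I • x3) * star (x0 + Complex.I • x3)
        = star (x0 + Complex.I • x3) * (x0 + Complex.I • x3) ∧
    (x1 + Complex.I • x2) * star (x1 + Complex.I • x2)
        = star (x1 + Complex.I • x2) * (x1 + Complex.I • x2) ∧
    star (x0 + Complex.I • x3) * (x0 + Complex.I • x3)
        + star (x1 + Complex.I • x2) * (x1 + Complex.I • x2) = 1 ∧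
    (x0 + Complex.I • x3) * (x1 + Complex.I • x2)
        = Complex.exp ((θ : ℂ) * Complex.I)
            • ((x1 + Complex.I • x2) * (x0 + Complex.I • x3)) := by
  have pyth : (Real.cos (θ/2) : ℂ) ^ 2 + (Real.sin (θ/2) : ℂ) ^ 2 = 1 := by
    norm_cast; exact Real.cos_sq_add_sin_sq (θ/2)
  have r7' : x0 * x0 + x1 * x1 + x2 * x2 + x3 * x3 = 1 := by
    simpa only [pow_two] using r7
  refine ⟨?_, ?_, ?_, ?_⟩
  · simp only [star_add, star_smul, h0, h3, Complex.star_def, Complex.conj_I,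
      mul_add, add_mul, smul_mul_assoc, mul_smul_comm, neg_smul, smul_neg, smul_smul,
      mul_neg, neg_mul, Complex.I_mul_I, neg_neg, one_smul]
    linear_combination (norm := module) (-2 * Complex.I) • r3
  · simp only [star_add, star_smul, h1, h2, Complex.star_def, Complex.conj_I,
      mul_add, add_mul, smul_mul_assoc, mul_smul_comm, neg_smul, smul_neg, smul_smul,
      mul_neg, neg_mul, Complex.I_mul_I, neg_neg, one_smul]
    linear_combination (norm := module) (-2 * Complex.I) • r6
  · simp only [star_add, star_smul, h0, h1, h2, h3, Complex.star_def, Complex.conj_I,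
      mul_add, add_mul, smul_mul_assoc, mul_smul_comm, neg_smul, smul_neg, smul_smul,
      mul_neg, neg_mul, Complex.I_mul_I, neg_neg, one_smul]
    linear_combination (norm :=
        (match_scalars <;> first
          | ring1
          | linear_combination -Complex.I_sq))
      r7' + Complex.I • r3 + Complex.I • r6
  · have key : Complex.exp ((θ : ℂ) * Complex.I)
        = ((Real.cos (θ/2) : ℂ) + Complex.I * (Real.sin (θ/2) : ℂ))^2 := by
      rw [show ((θ:ℂ) * Complex.I) = (((θ/2 : ℝ)):ℂ) * Complex.I + (((θ/2:ℝ)):ℂ) * Complex.I by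
            push_cast; ring,
          Complex.exp_add, ← sq, Complex.exp_mul_I, ← Complex.ofReal_cos, ← Complex.ofReal_sin]
      ring
    rw [key]
    simp only [mul_add, add_mul, smul_mul_assoc, mul_smul_comm, neg_smul, smul_neg, smul_smul,
      mul_neg, neg_mul, Complex.I_mul_I, neg_neg, one_smul, smul_add]
    have pyth2 : Complex.cos ((θ:ℂ)/2) ^ 2 + Complex.sin ((θ:ℂ)/2) ^ 2 = 1 :=
      Complex.cos_sq_add_sin_sq _
    linear_combination (norm := skip)
      ((Real.cos (θ/2) : ℂ) + Complex.I * (Real.sin (θ/2) : ℂ)) • r1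
        + ((Real.cos (θ/2) : ℂ) + Complex.I * (Real.sin (θ/2) : ℂ)) • r4
        + (Complex.I * ((Real.cos (θ/2) : ℂ) + Complex.I * (Real.sin (θ/2) : ℂ))) • r2
        + (Complex.I * ((Real.cos (θ/2) : ℂ) + Complex.I * (Real.sin (θ/2) : ℂ))) • r5
    match_scalars
    all_goals (first
      | ring1
      | linear_combination Complex.sin ((θ:ℂ)/2) ^ 2 * Complex.I_sq - pyth2
      | linear_combination (Complex.I * Complex.sin ((θ:ℂ)/2) ^ 2) * Complex.I_sq
          - Complex.I * pyth2
      | linear_combination pyth2 - Complex.sin ((θ:ℂ)/2) ^ 2 * Complex.I_sq)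
end

section
/- Let 𝒜 be a unital complex star algebra and z ∈ 𝒜. Then z satisfies the quantum-disc relation at q = −1, μ = 0, namely zz* + z*z = 2·1, if and only if the elements A := (z + z*)/2 and B := (z − z*)/(2i) are self-adjoint and satisfy the Markov quantum circle relation A² + B² = 1. (This identifies the universal algebra of the quantum disc at q = −1, μ = 0 with Markov's quantum circle.) -/
/-- The quantum disc at `q = −1`, `μ = 0` is Markov's quantum circle:
`zz* + z*z = 2` holds iff `A := (z + z*)/2` and `B := (z − z*)/(2i)` are
self-adjoint and satisfy `A² + B² = 1`. -/
theorem quantum_disc_is_markov_circle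
    {𝒜 : Type*} [Ring 𝒜] [Algebra ℂ 𝒜] [StarRing 𝒜] [StarModule ℂ 𝒜]
    (z : 𝒜) :
    z * star z + star z * z = 2 ↔
      (IsSelfAdjoint ((2 : ℂ)⁻¹ • (z + star z)) ∧
       IsSelfAdjoint ((2 * Complex.I)⁻¹ • (z - star z)) ∧
       ((2 : ℂ)⁻¹ • (z + star z)) ^ 2 + ((2 * Complex.I)⁻¹ • (z - star z)) ^ 2 = 1) := by
  have hA : IsSelfAdjoint ((2 : ℂ)⁻¹ • (z + star z)) := by
    simp [IsSelfAdjoint, star_smul, star_add, star_star, add_comm]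
  have hB : IsSelfAdjoint ((2 * Complex.I)⁻¹ • (z - star z)) := by
    have h1 : star ((2 * Complex.I)⁻¹) = -(2 * Complex.I)⁻¹ := by
      simp [Complex.star_def, map_inv₀, mul_comm]
    rw [IsSelfAdjoint, star_smul, star_sub, star_star, h1, neg_smul, ← smul_neg,
      neg_sub]
  have h2a : (2 : ℂ) • (1 : 𝒜) = 2 := by rw [Algebra.smul_def, mul_one, map_ofNat]
  have key : ((2 : ℂ)⁻¹ • (z + star z)) ^ 2 + ((2 * Complex.I)⁻¹ • (z - star z)) ^ 2
      = (2 : ℂ)⁻¹ • (z * star z + star z * z) := by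
    have h2 : ((2 * Complex.I)⁻¹) ^ 2 = -(((2:ℂ)⁻¹) ^ 2) := by
      have hI : Complex.I⁻¹ ^ 2 = -1 := by rw [inv_pow, Complex.I_sq]; norm_num
      rw [mul_inv, mul_pow, hI]; ring
    rw [smul_pow, smul_pow, h2, neg_smul, ← sub_eq_add_neg, ← smul_sub]
    have h3 : (z + star z) ^ 2 - (z - star z) ^ 2
        = (z * star z + star z * z) + (z * star z + star z * z) := by noncomm_ring
    rw [h3, smul_add, ← two_smul ℂ, smul_smul]
    norm_num
  have h1 : (2:ℂ)⁻¹ • (2:𝒜) = 1 := by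
    rw [← h2a, smul_smul]; norm_num
  constructor
  · intro h
    refine ⟨hA, hB, ?_⟩
    rw [key, h, h1]
  · rintro ⟨-, -, h⟩
    rw [key] at h
    exact smul_right_injective 𝒜 (by norm_num : (2:ℂ)⁻¹ ≠ 0) (h.trans h1.symm)
end
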